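/- arXiv:2204.09944 — 2 statements merged into one kernel-verified Lean document; each statement's English description precedes it below -/
import Mathlib

section
/- (Shisha–Mond) Let {Lₙ} be positive linear operators on C[a,b] with each Lₙ(1) bounded. Then for every f ∈ C[a,b] and every n, ‖f - Lₙ(f)‖_∞ ≤ ‖f‖_∞·‖Lₙ(1) - 1‖_∞ + ‖Lₙ(1) + 1‖_∞·ω(f, μₙ), where μₙ² = ‖Lₙ((t-x)²)(x)‖_∞ (the sup over x of Lₙ applied to t ↦ (t-x)² evaluated at x), provided μₙ > 0. -/
open Set

/-- Modulus of continuity of `f` on a set `S`. -/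
noncomputable def modulus (f : ℝ → ℝ) (S : Set ℝ) (δ : ℝ) : ℝ :=
  sSup {d : ℝ | ∃ x ∈ S, ∃ y ∈ S, |x - y| ≤ δ ∧ d = |f x - f y|}

/-- Sup-norm of `g` over a set `S`. -/
noncomputable def supN (S : Set ℝ) (g : ℝ → ℝ) : ℝ :=
  sSup ((fun x => |g x|) '' S)

/-!
Cutting the segment from `x` to `t` into `⌈|t - x| / δ⌉₊` pieces of length at most `δ` gives
`|f t - f x| ≤ ω(f, δ) (1 + (t - x)² / δ²)`. Applying the positive linear `Lₙ` in `t` and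
evaluating at `x` bounds `|f(x) Lₙ(1)(x) - Lₙ(f)(x)|` by
`ω(f, δ) (Lₙ(1)(x) + Lₙ((t - x)²)(x) / δ²)`, which is at most `ω(f, μₙ) (Lₙ(1)(x) + 1)` for
`δ = μₙ`. The term `f(x) (1 - Lₙ(1)(x))` accounts for the rest of `f(x) - Lₙ(f)(x)`.
-/

section supN

variable {S : Set ℝ} {g : ℝ → ℝ} {x c : ℝ}

lemma supN_nonneg : 0 ≤ supN S g :=
  Real.sSup_nonneg (by rintro _ ⟨y, -, rfl⟩; exact abs_nonneg _)

lemma supN_le (h : ∀ x ∈ S, |g x| ≤ c) (hc : 0 ≤ c) : supN S g ≤ c :=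
  Real.sSup_le (by rintro _ ⟨y, hy, rfl⟩; exact h y hy) hc

lemma abs_le_supN (hg : BddAbove ((fun y => |g y|) '' S)) (hx : x ∈ S) : |g x| ≤ supN S g :=
  le_csSup hg ⟨x, hx, rfl⟩

lemma abs_le_supN_of_forall_abs_le (hc : ∀ y ∈ S, |g y| ≤ c) (hx : x ∈ S) :
    |g x| ≤ supN S g :=
  abs_le_supN ⟨c, by rintro _ ⟨y, hy, rfl⟩; exact hc y hy⟩ hx

-- `sSup` of a set that is not bounded above is `0`, so a positive `supN` forces boundedness.
lemma abs_le_supN_of_pos (h : 0 < supN S g) (hx : x ∈ S) : |g x| ≤ supN S g :=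
  abs_le_supN (by_contra fun hg => h.ne' (Real.sSup_of_not_bddAbove hg)) hx

lemma abs_le_supN_of_continuousOn (hS : IsCompact S) (hg : ContinuousOn g S) (hx : x ∈ S) :
    |g x| ≤ supN S g :=
  abs_le_supN (hS.bddAbove_image (continuous_abs.comp_continuousOn hg)) hx

end supN

lemma natCeil_le_one_add_sq {r : ℝ} (hr : 0 ≤ r) : (⌈r⌉₊ : ℝ) ≤ 1 + r ^ 2 := by
  rcases le_total r 1 with h | h
  · have : (⌈r⌉₊ : ℝ) ≤ 1 := by exact_mod_cast Nat.ceil_le.2 (by simpa using h)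
    nlinarith [sq_nonneg r]
  · nlinarith [Nat.ceil_lt_add_one hr]

section modulus

variable {f : ℝ → ℝ} {S : Set ℝ} {δ ω : ℝ}

lemma modulus_nonneg : 0 ≤ modulus f S δ :=
  Real.sSup_nonneg (by rintro _ ⟨x, -, y, -, -, rfl⟩; exact abs_nonneg _)

lemma abs_sub_le_modulus (hS : IsCompact S) (hf : ContinuousOn f S) {x y : ℝ} (hx : x ∈ S)
    (hy : y ∈ S) (hxy : |x - y| ≤ δ) : |f x - f y| ≤ modulus f S δ := by
  obtain ⟨C, hC⟩ := hS.exists_bound_of_continuousOn hf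
  refine le_csSup ⟨C + C, ?_⟩ ⟨x, hx, y, hy, hxy, rfl⟩
  rintro _ ⟨u, hu, v, hv, -, rfl⟩
  exact (abs_sub _ _).trans (add_le_add (hC u hu) (hC v hv))

variable [S.OrdConnected]

lemma abs_sub_le_nat_mul_of_le (hδ : 0 ≤ δ)
    (hω : ∀ u ∈ S, ∀ v ∈ S, |u - v| ≤ δ → |f u - f v| ≤ ω) (m : ℕ) :
    ∀ {u v : ℝ}, u ∈ S → v ∈ S → u ≤ v → v - u ≤ m * δ → |f u - f v| ≤ m * ω := by
  induction m with
  | zero =>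
    intro u v _ _ huv h
    obtain rfl : u = v := by simp at h; linarith
    simp
  | succ m ih =>
    intro u v hu hv huv h
    set w := min (u + δ) v with hw_def
    have huw : u ≤ w := le_min (by linarith) huv
    have hw : w ∈ S := Set.OrdConnected.out ‹_› hu hv ⟨huw, min_le_right _ _⟩
    have hwv : v - w ≤ m * δ := by
      push_cast at h
      rcases min_cases (u + δ) v with ⟨hmin, -⟩ | ⟨hmin, -⟩ <;> rw [hw_def, hmin]
      · linarith
      · simpa using by positivity
    calc |f u - f v| ≤ |f u - f w| + |f w - f v| := abs_sub_le _ _ _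
      _ ≤ ω + m * ω := by
        refine add_le_add (hω u hu w hw ?_) (ih hw hv (min_le_right _ _) hwv)
        rw [abs_sub_comm, abs_of_nonneg (by linarith)]
        linarith [min_le_left (u + δ) v]
      _ = (m + 1 : ℕ) * ω := by push_cast; ring

lemma abs_sub_le_nat_mul (hδ : 0 ≤ δ)
    (hω : ∀ u ∈ S, ∀ v ∈ S, |u - v| ≤ δ → |f u - f v| ≤ ω) (m : ℕ) {u v : ℝ} (hu : u ∈ S)
    (hv : v ∈ S) (h : |u - v| ≤ m * δ) : |f u - f v| ≤ m * ω := by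
  rcases le_total u v with huv | hvu
  · rw [abs_sub_comm, abs_of_nonneg (sub_nonneg.2 huv)] at h
    exact abs_sub_le_nat_mul_of_le hδ hω m hu hv huv h
  · rw [abs_of_nonneg (sub_nonneg.2 hvu)] at h
    rw [abs_sub_comm]
    exact abs_sub_le_nat_mul_of_le hδ hω m hv hu hvu h

lemma abs_sub_le_mul_one_add_sq_div (hδ : 0 < δ)
    (hω : ∀ u ∈ S, ∀ v ∈ S, |u - v| ≤ δ → |f u - f v| ≤ ω) {t x : ℝ} (ht : t ∈ S)
    (hx : x ∈ S) : |f t - f x| ≤ ω * (1 + (t - x) ^ 2 / δ ^ 2) := by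
  have hω₀ : 0 ≤ ω := by simpa using hω x hx x hx (by simpa using hδ.le)
  have hm := abs_sub_le_nat_mul hδ.le hω ⌈|t - x| / δ⌉₊ ht hx
    ((div_le_iff₀ hδ).1 (Nat.le_ceil _))
  calc |f t - f x| ≤ ⌈|t - x| / δ⌉₊ * ω := hm
    _ ≤ (1 + (|t - x| / δ) ^ 2) * ω := by
      gcongr
      exact natCeil_le_one_add_sq (by positivity)
    _ = ω * (1 + (t - x) ^ 2 / δ ^ 2) := by rw [div_pow, sq_abs]; ring

end modulus

section positive

variable {α β : Type*} {T : (α → ℝ) →ₗ[ℝ] (β → ℝ)} {S : Set α} {x : β} {g h : α → ℝ}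

lemma apply_le_apply_of_le (hT : ∀ g, (∀ t ∈ S, 0 ≤ g t) → 0 ≤ T g x)
    (hgh : ∀ t ∈ S, g t ≤ h t) : T g x ≤ T h x := by
  simpa [map_sub] using hT (h - g) fun t ht => sub_nonneg.2 (hgh t ht)

lemma abs_apply_le_apply_of_abs_le (hT : ∀ g, (∀ t ∈ S, 0 ≤ g t) → 0 ≤ T g x)
    (hgh : ∀ t ∈ S, |g t| ≤ h t) : |T g x| ≤ T h x := by
  refine abs_le.2 ⟨?_, apply_le_apply_of_le hT fun t ht => (le_abs_self _).trans (hgh t ht)⟩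
  simpa using apply_le_apply_of_le hT (g := -h) fun t ht => neg_le_of_abs_le (hgh t ht)

end positive

lemma abs_sub_apply_le {T : (ℝ → ℝ) →ₗ[ℝ] (ℝ → ℝ)} {S : Set ℝ} {f : ℝ → ℝ} {x δ ω : ℝ}
    (hT : ∀ g, (∀ t ∈ S, 0 ≤ g t) → 0 ≤ T g x) (hx : x ∈ S) (hδ : 0 < δ)
    (hf : ∀ t ∈ S, |f t - f x| ≤ ω * (1 + (t - x) ^ 2 / δ ^ 2))
    (hQ : T (fun t => (t - x) ^ 2) x ≤ δ ^ 2) :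
    |f x - T f x| ≤ |f x| * |T (fun _ => 1) x - 1| + (T (fun _ => 1) x + 1) * ω := by
  have hω₀ : 0 ≤ ω := by simpa using (abs_nonneg _).trans (hf x hx)
  have hsplit : f x - T f x = f x * (1 - T (fun _ => 1) x) + T (fun t => f x - f t) x := by
    have : (fun t => f x - f t) = f x • (fun _ => (1 : ℝ)) - f := by ext; simp
    rw [this, map_sub, map_smul]
    simp only [Pi.sub_apply, Pi.smul_apply, smul_eq_mul]
    ring
  have hmajorant : T (fun t => ω * (1 + (t - x) ^ 2 / δ ^ 2)) x
      = ω * T (fun _ => 1) x + ω / δ ^ 2 * T (fun t => (t - x) ^ 2) x := by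
    have : (fun t => ω * (1 + (t - x) ^ 2 / δ ^ 2))
        = ω • (fun _ => (1 : ℝ)) + (ω / δ ^ 2) • fun t => (t - x) ^ 2 := by
      ext; simp only [Pi.add_apply, Pi.smul_apply, smul_eq_mul]; ring
    rw [this, map_add, map_smul, map_smul]
    rfl
  have hdiff : |T (fun t => f x - f t) x| ≤ ω * T (fun _ => 1) x + ω :=
    calc |T (fun t => f x - f t) x|
        ≤ T (fun t => ω * (1 + (t - x) ^ 2 / δ ^ 2)) x :=
          abs_apply_le_apply_of_abs_le hT fun t ht => abs_sub_comm (f x) (f t) ▸ hf t ht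
      _ ≤ ω * T (fun _ => 1) x + ω / δ ^ 2 * δ ^ 2 := by rw [hmajorant]; gcongr
      _ = ω * T (fun _ => 1) x + ω := by field_simp
  calc |f x - T f x| ≤ |f x * (1 - T (fun _ => 1) x)| + |T (fun t => f x - f t) x| := by
        rw [hsplit]; exact abs_add_le _ _
    _ ≤ |f x| * |T (fun _ => 1) x - 1| + (T (fun _ => 1) x + 1) * ω := by
        rw [abs_mul, abs_sub_comm 1]; linarith

theorem shisha_mond_general (a b : ℝ)
    (L : ℕ → (ℝ → ℝ) →ₗ[ℝ] (ℝ → ℝ))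
    (hpos : ∀ (n : ℕ) (g : ℝ → ℝ), (∀ t ∈ Icc a b, 0 ≤ g t) →
      ∀ x ∈ Icc a b, 0 ≤ L n g x)
    (hbdd : ∀ n : ℕ, ∃ M : ℝ, ∀ x ∈ Icc a b, |L n (fun _ => 1) x| ≤ M)
    (f : ℝ → ℝ) (hf : ContinuousOn f (Icc a b))
    (n : ℕ) (μn : ℝ) (hμpos : 0 < μn)
    (hμ : μn ^ 2 = supN (Icc a b) (fun x => L n (fun t => (t - x) ^ 2) x)) :
    supN (Icc a b) (fun x => f x - L n f x) ≤
      supN (Icc a b) f * supN (Icc a b) (fun x => L n (fun _ => 1) x - 1)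
        + supN (Icc a b) (fun x => L n (fun _ => 1) x + 1) *
            modulus f (Icc a b) μn := by
  obtain ⟨M, hM⟩ := hbdd n
  refine supN_le (fun x hx => ?_) (add_nonneg (mul_nonneg supN_nonneg supN_nonneg)
    (mul_nonneg supN_nonneg modulus_nonneg))
  have hQ : L n (fun t => (t - x) ^ 2) x ≤ μn ^ 2 :=
    hμ ▸ (le_abs_self _).trans (abs_le_supN_of_pos (hμ ▸ pow_pos hμpos 2) hx)
  have hosc : ∀ t ∈ Icc a b,
      |f t - f x| ≤ modulus f (Icc a b) μn * (1 + (t - x) ^ 2 / μn ^ 2) :=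
    fun t ht => abs_sub_le_mul_one_add_sq_div hμpos
      (fun u hu v hv => abs_sub_le_modulus isCompact_Icc hf hu hv) ht hx
  have hfx := abs_le_supN_of_continuousOn isCompact_Icc hf hx
  have hsub := abs_le_supN_of_forall_abs_le (g := fun y => L n (fun _ => 1) y - 1) (c := M + 1)
    (fun y hy => (abs_sub _ _).trans (by rw [abs_one]; linarith [hM y hy])) hx
  have hadd := abs_le_supN_of_forall_abs_le (g := fun y => L n (fun _ => 1) y + 1) (c := M + 1)
    (fun y hy => (abs_add_le _ _).trans (by rw [abs_one]; linarith [hM y hy])) hx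
  calc |f x - L n f x|
      ≤ |f x| * |L n (fun _ => 1) x - 1| + (L n (fun _ => 1) x + 1) * modulus f (Icc a b) μn :=
        abs_sub_apply_le (hpos n · · x hx) hx hμpos hosc hQ
    _ ≤ _ := by
        gcongr
        exacts [supN_nonneg, modulus_nonneg, (le_abs_self _).trans hadd]

/-- Shisha–Mond quantitative Korovkin theorem. -/
theorem shisha_mond (a b : ℝ) (hab : a < b)
    (L : ℕ → (ℝ → ℝ) →ₗ[ℝ] (ℝ → ℝ))
    (hpos : ∀ (n : ℕ) (g : ℝ → ℝ), (∀ t ∈ Icc a b, 0 ≤ g t) →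
      ∀ x ∈ Icc a b, 0 ≤ L n g x)
    (hbdd : ∀ n : ℕ, ∃ M : ℝ, ∀ x ∈ Icc a b, |L n (fun _ => 1) x| ≤ M)
    (f : ℝ → ℝ) (hf : ContinuousOn f (Icc a b))
    (n : ℕ) (μn : ℝ) (hμpos : 0 < μn)
    (hμ : μn ^ 2 = supN (Icc a b) (fun x => L n (fun t => (t - x) ^ 2) x)) :
    supN (Icc a b) (fun x => f x - L n f x) ≤
      supN (Icc a b) f * supN (Icc a b) (fun x => L n (fun _ => 1) x - 1)
        + supN (Icc a b) (fun x => L n (fun _ => 1) x + 1) *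
            modulus f (Icc a b) μn :=
  shisha_mond_general a b L hpos hbdd f hf n μn hμpos hμ
end

section
/- For the Kantorovich polynomials, the L¹ norm of the function x ↦ Kₙ((x − t)²)(x) on [0,1] equals 1/(6(n+1)); i.e., ∫₀¹ Kₙ((x − ·)²)(x) dx = 1/(6(n+1)). -/
/-!
The inner integral over `[k/(n+1), (k+1)/(n+1)]` turns the `k`-th term of `Kₙ((x−·)²)(x)` into
`b_{n,k}(x) · ((x − (k+1/2)/(n+1))² + 1/(12(n+1)²))`, with `b_{n,k}` the Bernstein basis.
Since `(n+1)x − k − 1/2 = (nx − k) + (x − 1/2)`, the Bernstein moment identities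
`∑ b_{n,k} = 1`, `∑ (nx − k) b_{n,k} = 0` and `∑ (nx − k)² b_{n,k} = nx(1−x)` give
`Kₙ((x−·)²)(x) = ((n−1)x(1−x) + 1/3)/(n+1)²`, whose integral over `[0,1]` is `1/(6(n+1))`.
-/

open Set MeasureTheory

/-- The Kantorovich polynomial operator. -/
noncomputable def K (n : ℕ) (f : ℝ → ℝ) (x : ℝ) : ℝ :=
  ((n : ℝ) + 1) * ∑ k ∈ Finset.range (n + 1),
    (n.choose k : ℝ) * x ^ k * (1 - x) ^ (n - k) *
      ∫ t in ((k : ℝ) / ((n : ℝ) + 1))..(((k : ℝ) + 1) / ((n : ℝ) + 1)), f t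

open Polynomial

namespace bernsteinPolynomial

variable {R : Type*} [CommRing R]

theorem eval_eq (n k : ℕ) (x : R) :
    (bernsteinPolynomial R n k).eval x = n.choose k * x ^ k * (1 - x) ^ (n - k) := by
  simp [bernsteinPolynomial]

theorem sum_eval (n : ℕ) (x : R) :
    ∑ k ∈ Finset.range (n + 1), (bernsteinPolynomial R n k).eval x = 1 := by
  simpa [eval_finsetSum] using congrArg (eval x) (sum R n)

theorem sum_sub_mul_eval (n : ℕ) (x : R) :
    ∑ k ∈ Finset.range (n + 1), (n * x - k) * (bernsteinPolynomial R n k).eval x = 0 := by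
  have h := congrArg (eval x) (sum_smul R n)
  simp only [eval_finsetSum, eval_mul, eval_natCast, nsmul_eq_mul, eval_X] at h
  simp only [sub_mul, Finset.sum_sub_distrib, mul_assoc, ← Finset.mul_sum, sum_eval, h, mul_one,
    sub_self]

theorem sum_sub_sq_mul_eval (n : ℕ) (x : R) :
    ∑ k ∈ Finset.range (n + 1), (n * x - k) ^ 2 * (bernsteinPolynomial R n k).eval x
      = n * x * (1 - x) := by
  simpa [eval_finsetSum] using congrArg (eval x) (variance R n)

end bernsteinPolynomial

namespace intervalIntegral

theorem integral_sub_sq (x a b : ℝ) :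
    ∫ t in a..b, (x - t) ^ 2 = (b - a) * ((x - (a + b) / 2) ^ 2 + (b - a) ^ 2 / 12) := by
  rw [integral_comp_sub_left (fun t => t ^ 2) x, integral_pow]
  ring

theorem integral_zero_one_mul_one_sub_add (c d : ℝ) :
    ∫ x in (0:ℝ)..1, (c * x * (1 - x) + d) = c / 6 + d := by
  have h : ∀ x : ℝ, c * x * (1 - x) + d = c * x - c * x ^ 2 + d := fun x => by ring
  simp only [h]
  rw [integral_add, integral_sub, integral_const_mul, integral_const_mul, integral_id,
    integral_pow]
  · norm_num
    ring
  all_goals exact Continuous.intervalIntegrable (by fun_prop) _ _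

end intervalIntegral

theorem K_sub_sq_self (n : ℕ) (x : ℝ) :
    K n (fun t => (x - t) ^ 2) x = ((n - 1) * x * (1 - x) + 1 / 3) / ((n : ℝ) + 1) ^ 2 := by
  set N : ℝ := n + 1
  have hN : N ≠ 0 := by positivity
  calc K n (fun t => (x - t) ^ 2) x
      = (∑ k ∈ Finset.range (n + 1), ((n * x - k) ^ 2 * (bernsteinPolynomial ℝ n k).eval x
          + 2 * (x - 1 / 2) * ((n * x - k) * (bernsteinPolynomial ℝ n k).eval x)
          + ((x - 1 / 2) ^ 2 + 1 / 12) * (bernsteinPolynomial ℝ n k).eval x)) / N ^ 2 := by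
        rw [K, Finset.mul_sum, Finset.sum_div]
        refine Finset.sum_congr rfl fun k _ => ?_
        rw [intervalIntegral.integral_sub_sq, bernsteinPolynomial.eval_eq]
        field_simp
        ring
    _ = (n * x * (1 - x) + 2 * (x - 1 / 2) * 0 + ((x - 1 / 2) ^ 2 + 1 / 12) * 1) / N ^ 2 := by
        rw [Finset.sum_add_distrib, Finset.sum_add_distrib, ← Finset.mul_sum, ← Finset.mul_sum,
          bernsteinPolynomial.sum_sub_sq_mul_eval, bernsteinPolynomial.sum_sub_mul_eval,
          bernsteinPolynomial.sum_eval]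
    _ = ((n - 1) * x * (1 - x) + 1 / 3) / N ^ 2 := by ring

theorem kantorovich_second_moment_L1_general (n : ℕ) :
    ∫ x in (0:ℝ)..1, K n (fun t => (x - t) ^ 2) x = 1 / (6 * ((n : ℝ) + 1)) := by
  simp_rw [K_sub_sq_self]
  rw [intervalIntegral.integral_div, intervalIntegral.integral_zero_one_mul_one_sub_add]
  field_simp
  ring

/-- The `L¹` norm of `x ↦ Kₙ((x−t)²)(x)` equals `1/(6(n+1))`. -/
theorem kantorovich_second_moment_L1 (n : ℕ) (hn : 1 ≤ n) :
    ∫ x in (0:ℝ)..1, K n (fun t => (x - t) ^ 2) x = 1 / (6 * ((n : ℝ) + 1)) :=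
  kantorovich_second_moment_L1_general n
end
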